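/- Let y ∈ E and 0 ≤ j ≤ r, and write β_j := Dα_j ∈ Φ0 (so β_i = α_i for 1 ≤ i ≤ r and β_0 = −φ). Then: (1) if s_j·y = y, then 𝔰_y^{β_j∨} = k_j^{−2} and s_{β_j}·𝔰_y = k_j^{2β_j}·𝔰_y in T_Λ, where k_j^{2β_j} ∈ T_Λ denotes the character λ ↦ k_j^{2·β_j(λ)}; (2) if s_j·y ≠ y, then s_{β_j}·𝔰_y = 𝔰_{s_j·y} in T_Λ. -/

import Mathlib

/-!
Write `σ_β α` for whichever of `±s_β α` is a positive root. For every root `β`, `σ_β` is an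
involution of `Φ0⁺` preserving `k`, and reindexing the product defining `𝔰_y` along it shows
`s_β · 𝔰_y = ∏_{α ∈ Φ0⁺} k_α^{e_α α}` with `e_α = ±η((σ_β α)(y))`. For `β = α_i` the involution is
`s_i` on `Φ0⁺ ∖ {α_i}`; for `β = φ` it fixes the positive roots orthogonal to `φ` and swaps `α` with
`φ − α` when `⟨α, φ∨⟩ = 1`, the only other value (`φ` is highest, and at least as long as `α`).
Since `η(1 − x) = −η(x)`, in both cases `e_α = η(α(s_j y))` for all `α ≠ β`, so only the factor of
`β` itself needs care: it produces `k_β^{2β}` when `s_j y = y`, and it matches `η(β(s_j y))` by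
`η(x + 1) = η(x)` (`x ≠ 0`) when `s_j y ≠ y`. For `𝔰_y(β∨) = k_β^{-2}`, the factors of `α` and
`σ_β α` cancel for every `α ≠ β`.
-/

open scoped InnerProductSpace Classical

noncomputable section

namespace SSV

variable {E : Type*} [NormedAddCommGroup E] [InnerProductSpace ℝ E]

/-- The coroot `α∨ = (2/‖α‖²)·α` of `α ∈ E`, under the identification of `E*` with `E`
via the inner product (a root `α` acts on `E` as the linear functional `y ↦ ⟪α,y⟫`). -/
def cv (α : E) : E := (2 / ⟪α, α⟫_ℝ) • α

/-- The linear functional `y ↦ ⟪α∨, y⟫ = 2⟪α,y⟫/‖α‖²`. -/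
def rootForm (α : E) : E →ₗ[ℝ] ℝ where
  toFun y := 2 / ⟪α, α⟫_ℝ * ⟪α, y⟫_ℝ
  map_add' y z := by rw [inner_add_right]; ring
  map_smul' c y := by
    simp only [RingHom.id_apply, smul_eq_mul, real_inner_smul_right]
    ring

/-- The orthogonal reflection `s_α : y ↦ y − α(y)·α∨` in the hyperplane `α = 0`. -/
def lrefl (α : E) : E ≃ₗ[ℝ] E :=
  if h : ⟪α, α⟫_ℝ = 0 then LinearEquiv.refl ℝ E
  else
    Module.reflection (f := rootForm α) (x := α)
      (by simp only [rootForm, LinearMap.coe_mk, AddHom.coe_mk]; field_simp)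

/-- The affine reflection `s_a : y ↦ y − a(y)·α∨` associated to the affine root
`a = (α, c)`, i.e. to the affine function `y ↦ α(y) + c = ⟪α,y⟫ + c` on `E`. -/
def aRefl (α : E) (c : ℝ) : E ≃ᵃ[ℝ] E :=
  (lrefl α).toAffineEquiv.trans (AffineEquiv.constVAdd ℝ E (-(c • cv α)))

/-- The translation `τ(μ) : y ↦ y + μ`. -/
def tr (μ : E) : E ≃ᵃ[ℝ] E := AffineEquiv.constVAdd ℝ E μ

/-- `η = χ_{ℤ_{>0}} − χ_{ℤ_{≤0}} : ℝ → {−1,0,1}`. -/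
def eta (x : ℝ) : ℤ :=
  if ∃ n : ℤ, x = (n : ℝ) then (if 0 < x then 1 else -1) else 0

/-- `sgn(ℓ) = ℓ/|ℓ|` for `ℓ ≠ 0`, and `sgn(0) = 1`. -/
def sgnz (l : ℤ) : ℤ := if 0 ≤ l then 1 else -1

/-- The alternating word `j j' j j' ⋯` of length `m`. -/
def altList {n : ℕ} (j j' : Fin n) (m : ℕ) : List (Fin n) :=
  (List.range m).map fun s => if s % 2 = 0 then j else j'

/-- Evaluation of the affine function `a = (α, c)` at `y`: `a(y) = α(y) + c`. -/
def aval (a : E × ℝ) (y : E) : ℝ := ⟪a.1, y⟫_ℝ + a.2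

/-- The contragredient action of `w` on affine roots: `(w·a)(y) = a(w⁻¹·y)`. -/
def wact (w : E ≃ᵃ[ℝ] E) (a : E × ℝ) : E × ℝ :=
  (w.linear a.1, a.2 - ⟪w.linear a.1, w 0⟫_ℝ)

/-- The relation `y ≺_α z`. -/
def precA (α : E) (y z : E) : Prop :=
  (∃ l : ℤ, y = aRefl α (l : ℝ) z) ∧
    (|⟪α, y⟫_ℝ| < |⟪α, z⟫_ℝ| ∨ (⟪α, y⟫_ℝ = -⟪α, z⟫_ℝ ∧ 0 < ⟪α, y⟫_ℝ))

/-- The data of a reduced irreducible finite root system `Φ0` realised in `E* ≅ E`,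
normalised so that long roots have squared length `2/m²`, together with a choice of
positive roots, simple roots `α_1, …, α_r`, and the corresponding highest root `φ`. -/
structure Data (E : Type*) [NormedAddCommGroup E] [InnerProductSpace ℝ E] where
  r : ℕ
  r_pos : 0 < r
  m : ℕ
  m_pos : 0 < m
  Φ0 : Finset E
  pos : Finset E
  simple : Fin r → E
  hroot : E
  root_ne_zero : ∀ α ∈ Φ0, α ≠ 0
  root_neg_mem : ∀ α ∈ Φ0, -α ∈ Φ0
  root_reduced : ∀ α ∈ Φ0, ∀ c : ℝ, c • α ∈ Φ0 → c = 1 ∨ c = -1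
  root_refl_mem : ∀ α ∈ Φ0, ∀ β ∈ Φ0, aRefl α 0 β ∈ Φ0
  root_crystal : ∀ α ∈ Φ0, ∀ β ∈ Φ0, ∃ n : ℤ, ⟪cv β, α⟫_ℝ = (n : ℝ)
  root_irred : ∀ A B : Set E, (Φ0 : Set E) = A ∪ B → A.Nonempty → B.Nonempty →
    (∀ a ∈ A, ∀ b ∈ B, ⟪a, b⟫_ℝ = 0) → False
  root_norm_le : ∀ α ∈ Φ0, ⟪α, α⟫_ℝ ≤ 2 / (m : ℝ) ^ 2
  root_norm_int : ∀ α ∈ Φ0, ∃ n : ℤ, (n : ℝ) * ⟪α, α⟫_ℝ = 2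
  pos_subset : pos ⊆ Φ0
  pos_dichotomy : ∀ α ∈ Φ0, (α ∈ pos ∧ -α ∉ pos) ∨ (α ∉ pos ∧ -α ∈ pos)
  simple_mem_pos : ∀ i, simple i ∈ pos
  simple_indep : LinearIndependent ℝ simple
  pos_nat_comb : ∀ α ∈ pos, ∃ n : Fin r → ℕ, α = ∑ i, (n i : ℝ) • simple i
  hroot_mem_pos : hroot ∈ pos
  hroot_long : ⟪hroot, hroot⟫_ℝ = 2 / (m : ℝ) ^ 2
  hroot_highest : ∀ α ∈ Φ0, ∃ n : Fin r → ℕ, hroot - α = ∑ i, (n i : ℝ) • simple i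

namespace Data

variable (D : Data E)

/-- The coroot lattice `Q∨`. -/
def Qv : AddSubgroup E := AddSubgroup.closure (cv '' (D.Φ0 : Set E))

/-- The simple affine roots `α_0 = (−φ, 1)` and `α_i = (α_i, 0)` (`1 ≤ i ≤ r`), as pairs
`(gradient, constant term)`. -/
def asimple : Fin (D.r + 1) → E × ℝ :=
  Fin.cases (-D.hroot, (1 : ℝ)) fun i => (D.simple i, (0 : ℝ))

/-- The simple reflections `s_0, …, s_r` of the affine Weyl group. -/
def sgen (j : Fin (D.r + 1)) : E ≃ᵃ[ℝ] E := aRefl (D.asimple j).1 (D.asimple j).2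

/-- `a = (α, c)` is an affine root iff `α ∈ Φ0` and `c ∈ ℤ`. -/
def IsAffRoot (a : E × ℝ) : Prop := a.1 ∈ D.Φ0 ∧ ∃ n : ℤ, a.2 = (n : ℝ)

/-- `a` is a positive affine root. -/
def IsPosAff (a : E × ℝ) : Prop :=
  D.IsAffRoot a ∧ (0 < a.2 ∨ (a.2 = 0 ∧ a.1 ∈ D.pos))

/-- The set of reflections `s_α`, `α ∈ Φ0`. -/
def reflSet : Set (E ≃ᵃ[ℝ] E) := {g | ∃ α ∈ D.Φ0, g = aRefl α 0}

/-- The set of translations `τ(μ)`, `μ ∈ Q∨`. -/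
def trSet : Set (E ≃ᵃ[ℝ] E) := {g | ∃ μ ∈ D.Qv, g = tr μ}

/-- The finite Weyl group `W0`, generated by the reflections `s_α`. -/
def W0 : Subgroup (E ≃ᵃ[ℝ] E) := Subgroup.closure D.reflSet

/-- The affine Weyl group `W = W0 ⋉ Q∨`. -/
def W : Subgroup (E ≃ᵃ[ℝ] E) := Subgroup.closure (D.reflSet ∪ D.trSet)

/-- The inversion set `Π(w) = Φ+ ∩ w⁻¹Φ−`. -/
def PiSet (w : E ≃ᵃ[ℝ] E) : Set (E × ℝ) :=
  {a | D.IsPosAff a ∧ ¬D.IsPosAff (wact w a)}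

/-- The length function `ℓ(w) := #Π(w)`. -/
def len (w : E ≃ᵃ[ℝ] E) : ℕ := (D.PiSet w).ncard

/-- The open fundamental alcove `C₊`. -/
def Cp : Set E := {y | ∀ α ∈ D.pos, 0 < ⟪α, y⟫_ℝ ∧ ⟪α, y⟫_ℝ < 1}

/-- The closed fundamental alcove `C̄₊`. -/
def Cbar : Set E := closure D.Cp

/-- The face `C^J` of `C̄₊` (for `J ⊊ {0,…,r}`). -/
def CJ (J : Set (Fin (D.r + 1))) : Set E :=
  {c | c ∈ D.Cbar ∧ ∀ j, aval (D.asimple j) c = 0 ↔ j ∈ J}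

/-- The orbit `O_c = W·c`. -/
def Orb (c : E) : Set E := {y | ∃ w ∈ D.W, w c = y}

/-- The unique point `c_y ∈ C̄₊` in the `W`-orbit of `y`. -/
def cpt (y : E) : E :=
  if h : ∃ c, c ∈ D.Cbar ∧ ∃ w ∈ D.W, w c = y then h.choose else 0

/-- The unique shortest element `w_y ∈ W` with `w_y · c_y = y`. -/
def wmin (y : E) : E ≃ᵃ[ℝ] E :=
  if h : ∃ w, (w ∈ D.W ∧ w (D.cpt y) = y) ∧
      ∀ u, u ∈ D.W → u (D.cpt y) = y → D.len w ≤ D.len u then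
    h.choose
  else 1

/-- Reflections of the Coxeter system `(W, {s_0, …, s_r})`. -/
def IsCoxRefl (g : E ≃ᵃ[ℝ] E) : Prop := ∃ w ∈ D.W, ∃ j, g = w * D.sgen j * w⁻¹

/-- A single step in the Bruhat order. -/
def bstep (u v : E ≃ᵃ[ℝ] E) : Prop :=
  (∃ g, D.IsCoxRefl g ∧ v = g * u) ∧ D.len u < D.len v

/-- The Bruhat order `≤_B` of `(W, {s_0, …, s_r})`. -/
def bruhatLE : (E ≃ᵃ[ℝ] E) → (E ≃ᵃ[ℝ] E) → Prop := Relation.ReflTransGen D.bstep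

/-- The strict Bruhat order `<_B`. -/
def bruhatLT (u v : E ≃ᵃ[ℝ] E) : Prop := D.bruhatLE u v ∧ u ≠ v

/-- The parabolic Bruhat order `≤` on `E`: `y ≤ z` iff `y ∈ W·z` and `w_y ≤_B w_z`. -/
def paraLE (y z : E) : Prop :=
  (∃ w ∈ D.W, w z = y) ∧ D.bruhatLE (D.wmin y) (D.wmin z)

/-- The strict parabolic Bruhat order `<` on `E`. -/
def paraLT (y z : E) : Prop := D.paraLE y z ∧ y ≠ z

/-- The relation `≺`, the transitive closure of the `≺_α` (`α ∈ Φ0+`). -/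
def prec : E → E → Prop :=
  Relation.TransGen fun y z => ∃ α ∈ D.pos, precA α y z

/-- The relation `⪯`. -/
def precLE (y z : E) : Prop := D.prec y z ∨ y = z

/-- The parabolic subgroup `W_J` of `W`. -/
def WJ (J : Set (Fin (D.r + 1))) : Subgroup (E ≃ᵃ[ℝ] E) :=
  Subgroup.closure {g | ∃ j ∈ J, g = D.sgen j}

/-- The set `W^J` of minimal-length representatives of the cosets `W/W_J`. -/
def WminJ (J : Set (Fin (D.r + 1))) : Set (E ≃ᵃ[ℝ] E) :=
  {w | w ∈ D.W ∧ ∀ u ∈ D.WJ J, D.len w ≤ D.len (w * u)}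

/-- Dominant elements: `α(μ) ≥ 0` for all `α ∈ Φ0+`. -/
def IsDom (μ : E) : Prop := ∀ α ∈ D.pos, 0 ≤ ⟪α, μ⟫_ℝ

/-- `Π0(v) = Φ0+ ∩ v⁻¹Φ0−` for `v ∈ W0`. -/
def Pi0 (v : E ≃ᵃ[ℝ] E) : Finset E := D.pos.filter fun α => -(v.linear α) ∈ D.pos

/-- `χ = χ₊ − χ₋ : Φ0 → {±1}`. -/
def chi (α : E) : ℤ := if α ∈ D.pos then 1 else -1

end Data

/-- The character `𝔰_y : μ ↦ ∏_{α ∈ Φ0+} k_α^{η(α(y))·α(μ)}` (evaluated at points `μ` where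
all `α(μ)` are integers, e.g. on a lattice `Λ ∈ 𝓛`). -/
def sweight {F : Type*} [Field F] (D : Data E) (k : E → Fˣ) (y μ : E) : Fˣ :=
  ∏ α ∈ D.pos, k α ^ (eta ⟪α, y⟫_ℝ * ⌊⟪α, μ⟫_ℝ⌋)

/-- The action of `w ∈ W` on characters of `Q∨`: for `w = τ(ν)v`,
`(w·t)(μ) = q^{⟪ν,μ⟫}·t(v⁻¹μ)`. -/
def charAct {F : Type*} [Field F] (q : Fˣ) (w : E ≃ᵃ[ℝ] E) (t : E → Fˣ) : E → Fˣ :=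
  fun μ => q ^ ⌊⟪w 0, μ⟫_ℝ⌋ * t (w.linear.symm μ)

/-- `t` defines a multiplicative character of `Q∨`, i.e. an element of `T = Hom(Q∨, Fˣ)`. -/
def IsChar {F : Type*} [Field F] (D : Data E) (t : E → Fˣ) : Prop :=
  ∀ μ ∈ D.Qv, ∀ ν ∈ D.Qv, t (μ + ν) = t μ * t ν

/-- `q_α := q^{2/‖α‖²}`. -/
def qroot {F : Type*} [Field F] (q : Fˣ) (α : E) : Fˣ := q ^ ⌊2 / ⟪α, α⟫_ℝ⌋

/-- Membership in `T_J`: `t ∈ T` with `t^{α_i∨} = 1` for `i ∈ J ∩ {1,…,r}`, and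
`q_φ·t^{−φ∨} = 1` if `0 ∈ J`. -/
def InTJ {F : Type*} [Field F] (D : Data E) (q : Fˣ) (J : Set (Fin (D.r + 1)))
    (t : E → Fˣ) : Prop :=
  IsChar D t ∧ (∀ i : Fin D.r, i.succ ∈ J → t (cv (D.simple i)) = 1) ∧
    ((0 : Fin (D.r + 1)) ∈ J → qroot q D.hroot * t (-cv D.hroot) = 1)

/-- `κ_v(y) = ∏_{α ∈ Π0(v)} k_α^{−η(α(y))}`. -/
def kappa {F : Type*} [Field F] (D : Data E) (k : E → Fˣ) (v : E ≃ᵃ[ℝ] E) (y : E) : Fˣ :=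
  ∏ α ∈ D.Pi0 v, k α ^ (-eta ⟪α, y⟫_ℝ)

/-- The (quasi-)monomial `x^y`, as an element of `⊕_{z ∈ E} F x^z`. -/
def xmono (F : Type*) [Field F] (y : E) : E →₀ F := Finsupp.single y 1

/-- The multiplication operator `π(x^μ) : x^y ↦ x^{y+μ}`. -/
def xop (F : Type*) [Field F] (μ : E) : Module.End F (E →₀ F) :=
  Finsupp.lmapDomain F F (· + μ)

/-- The truncated divided difference `∇_i(x^y)` in its explicit form: with `n = ⌊α(y)⌋`,
`−(x^{y−α∨} + ⋯ + x^{y−nα∨})` if `n ≥ 1`, `0` if `n = 0`, and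
`x^y + x^{y+α∨} + ⋯ + x^{y+(−n−1)α∨}` if `n ≤ −1`. -/
def nablaS (F : Type*) [Field F] (α y : E) : E →₀ F :=
  if 1 ≤ ⌊⟪α, y⟫_ℝ⌋ then
    -∑ s ∈ Finset.Icc (1 : ℤ) ⌊⟪α, y⟫_ℝ⌋, Finsupp.single (y - (s : ℝ) • cv α) (1 : F)
  else
    ∑ s ∈ Finset.Icc (0 : ℤ) (-⌊⟪α, y⟫_ℝ⌋ - 1), Finsupp.single (y + (s : ℝ) • cv α) (1 : F)

/-- The truncated divided difference `∇_0(x^y)` in its explicit form: with `n = ⌊−φ(y)⌋`,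
`−(q_φ^{−1}x^{y+φ∨} + ⋯ + q_φ^{−n}x^{y+nφ∨})` if `n ≥ 1`, `0` if `n = 0`, and
`x^y + q_φ x^{y−φ∨} + ⋯ + q_φ^{−n−1}x^{y+(n+1)φ∨}` if `n ≤ −1`. -/
def nabla0 {F : Type*} [Field F] (D : Data E) (q : Fˣ) (y : E) : E →₀ F :=
  if 1 ≤ ⌊-⟪D.hroot, y⟫_ℝ⌋ then
    -∑ s ∈ Finset.Icc (1 : ℤ) ⌊-⟪D.hroot, y⟫_ℝ⌋,
      (((qroot q D.hroot : Fˣ) : F) ^ (-s)) • Finsupp.single (y + (s : ℝ) • cv D.hroot) (1 : F)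
  else
    ∑ s ∈ Finset.Icc (0 : ℤ) (-⌊-⟪D.hroot, y⟫_ℝ⌋ - 1),
      (((qroot q D.hroot : Fˣ) : F) ^ s) • Finsupp.single (y - (s : ℝ) • cv D.hroot) (1 : F)

/-- `k_j := k_{α_j}` (`0 ≤ j ≤ r`), with `k_0 = k_φ`. -/
def kgen {F : Type*} [Field F] (D : Data E) (k : E → Fˣ) : Fin (D.r + 1) → Fˣ :=
  Fin.cases (k D.hroot) fun i => k (D.simple i)

/-- The image of the monomial `x^y` under the truncated Demazure–Lusztig operator `π(T_j)`:
`π(T_i)x^y = k_i^{χ_ℤ(α_i(y))}x^{s_i y} + (k_i − k_i^{−1})∇_i(x^y)` for `1 ≤ i ≤ r`, and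
`π(T_0)x^y = k_0^{χ_ℤ(α_0(y))}𝔱_y^{φ∨}x^{s_φ y} + (k_0 − k_0^{−1})∇_0(x^y)`. -/
def Tfun {F : Type*} [Field F] (D : Data E) (q : Fˣ) (k t : E → Fˣ) :
    Fin (D.r + 1) → E → E →₀ F :=
  Fin.cases
    (fun y =>
      ((if ∃ n : ℤ, aval (D.asimple 0) y = (n : ℝ) then ((k D.hroot : Fˣ) : F) else 1) *
          ((charAct q (D.wmin y) t (cv D.hroot) : Fˣ) : F)) •
          Finsupp.single (aRefl D.hroot 0 y) (1 : F) +
        (((k D.hroot : Fˣ) : F) - (((k D.hroot)⁻¹ : Fˣ) : F)) • nabla0 D q y)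
    fun i y =>
      (if ∃ n : ℤ, ⟪D.simple i, y⟫_ℝ = (n : ℝ) then ((k (D.simple i) : Fˣ) : F) else 1) •
          Finsupp.single (aRefl (D.simple i) 0 y) (1 : F) +
        (((k (D.simple i) : Fˣ) : F) - (((k (D.simple i))⁻¹ : Fˣ) : F)) • nablaS F (D.simple i) y

/-- The truncated Demazure–Lusztig operator `π(T_j)` on `⊕_{y ∈ E} F x^y`. -/
def Top {F : Type*} [Field F] (D : Data E) (q : Fˣ) (k t : E → Fˣ) (j : Fin (D.r + 1)) :
    Module.End F (E →₀ F) :=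
  Finsupp.linearCombination F (Tfun D q k t j)

/-- `π(((1 − x^{−α(μ)α∨})/(1 − x^{α∨}))·x^μ)` applied to `x^y`: the finite geometric sum
appearing in the cross relation for `T_i`. -/
def crossS (F : Type*) [Field F] (α μ y : E) : E →₀ F :=
  if 1 ≤ ⌊⟪α, μ⟫_ℝ⌋ then
    -∑ s ∈ Finset.Icc (1 : ℤ) ⌊⟪α, μ⟫_ℝ⌋, Finsupp.single (y + μ - (s : ℝ) • cv α) (1 : F)
  else
    ∑ s ∈ Finset.Icc (0 : ℤ) (-⌊⟪α, μ⟫_ℝ⌋ - 1), Finsupp.single (y + μ + (s : ℝ) • cv α) (1 : F)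

/-- `π(((1 − (q_φ x^{−φ∨})^{φ(μ)})/(1 − q_φ x^{−φ∨}))·x^μ)` applied to `x^y`: the finite
geometric sum appearing in the cross relation for `T_0`. -/
def cross0 {F : Type*} [Field F] (D : Data E) (q : Fˣ) (μ y : E) : E →₀ F :=
  if 0 ≤ ⌊⟪D.hroot, μ⟫_ℝ⌋ then
    ∑ s ∈ Finset.Icc (0 : ℤ) (⌊⟪D.hroot, μ⟫_ℝ⌋ - 1),
      (((qroot q D.hroot : Fˣ) : F) ^ s) • Finsupp.single (y + μ - (s : ℝ) • cv D.hroot) (1 : F)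
  else
    -∑ s ∈ Finset.Icc (1 : ℤ) (-⌊⟪D.hroot, μ⟫_ℝ⌋),
      (((qroot q D.hroot : Fˣ) : F) ^ (-s)) • Finsupp.single (y + μ + (s : ℝ) • cv D.hroot) (1 : F)

/-- The quasi-monomial `x^y` in the model `Q^{(c)} ⊆ (E → Q)` of `Q ⊗_P P^{(c)}`:
`x^y` is the function `z ↦ x^{y−z}` supported on `y + Q∨`. -/
def xiQ {Q : Type*} [Field Q] (D : Data E) (mono : E → Q) (y : E) : E → Q :=
  fun z => if z - y ∈ D.Qv then mono (y - z) else 0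

/-- Membership in the model `Q^{(c)} ⊆ (E → Q)` of `Q ⊗_P P^{(c)}`: functions supported on
`O_c` satisfying the covariance `ξ(z + ν) = x^{−ν}·ξ(z)` (`ν ∈ Q∨`). -/
def IsQc {Q : Type*} [Field Q] (D : Data E) (mono : E → Q) (c : E) (ξ : E → Q) : Prop :=
  (∀ z, z ∉ D.Orb c → ξ z = 0) ∧
    ∀ z ∈ D.Orb c, ∀ ν ∈ D.Qv, ξ (z + ν) = (mono ν)⁻¹ * ξ z

/-- `x^{α_0∨} = q_φ x^{−φ∨}` as an element of `Q`. -/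
def xroot0 {F Q : Type*} [Field F] [Field Q] (D : Data E) (ι : F →+* Q) (q : Fˣ)
    (mono : E → Q) : Q :=
  ι ((qroot q D.hroot : Fˣ) : F) * mono (-cv D.hroot)

/-- The right-hand side of the defining formula for `σ(s_j)(x^y)`:
`(k_j^{χ_ℤ(α_j(y))}(x^{α_j∨} − 1)/(k_j x^{α_j∨} − k_j^{−1}))·s_{j,𝔱}x^y
 + ((k_j − k_j^{−1})/(k_j x^{α_j∨} − k_j^{−1}))·x^{y − ⌊Dα_j(y)⌋α_j∨}`. -/
def sigmaFormula {F Q : Type*} [Field F] [Field Q] (D : Data E) (ι : F →+* Q) (q : Fˣ)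
    (k t : E → Fˣ) (mono : E → Q) : Fin (D.r + 1) → E → E → Q :=
  Fin.cases
    (fun y =>
      (((if ∃ n : ℤ, aval (D.asimple 0) y = (n : ℝ) then ι ((k D.hroot : Fˣ) : F) else 1) *
            (xroot0 D ι q mono - 1)) /
          (ι ((k D.hroot : Fˣ) : F) * xroot0 D ι q mono - ι (((k D.hroot)⁻¹ : Fˣ) : F))) •
          (ι ((charAct q (D.wmin y) t (cv D.hroot) : Fˣ) : F) •
            xiQ D mono (aRefl D.hroot 0 y)) +
        ((ι ((k D.hroot : Fˣ) : F) - ι (((k D.hroot)⁻¹ : Fˣ) : F)) /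
          (ι ((k D.hroot : Fˣ) : F) * xroot0 D ι q mono - ι (((k D.hroot)⁻¹ : Fˣ) : F))) •
          (ι (((qroot q D.hroot ^ (-⌊-⟪D.hroot, y⟫_ℝ⌋) : Fˣ) : F)) •
            xiQ D mono (y + (⌊-⟪D.hroot, y⟫_ℝ⌋ : ℝ) • cv D.hroot)))
    fun i y =>
      (((if ∃ n : ℤ, ⟪D.simple i, y⟫_ℝ = (n : ℝ) then ι ((k (D.simple i) : Fˣ) : F) else 1) *
            (mono (cv (D.simple i)) - 1)) /
          (ι ((k (D.simple i) : Fˣ) : F) * mono (cv (D.simple i)) -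
            ι (((k (D.simple i))⁻¹ : Fˣ) : F))) •
          xiQ D mono (aRefl (D.simple i) 0 y) +
        ((ι ((k (D.simple i) : Fˣ) : F) - ι (((k (D.simple i))⁻¹ : Fˣ) : F)) /
          (ι ((k (D.simple i) : Fˣ) : F) * mono (cv (D.simple i)) -
            ι (((k (D.simple i))⁻¹ : Fˣ) : F))) •
          xiQ D mono (y - (⌊⟪D.simple i, y⟫_ℝ⌋ : ℝ) • cv (D.simple i))

end SSV

namespace SSV

lemma eta_intCast (n : ℤ) : eta n = if 0 < n then 1 else -1 := by
  simp [eta]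

lemma eta_of_forall_ne_intCast {x : ℝ} (hx : ¬∃ n : ℤ, x = n) : eta x = 0 := by
  simp only [eta, if_neg hx]

lemma eta_zero : eta 0 = -1 := by simpa using eta_intCast 0

lemma eta_one : eta 1 = 1 := by simpa using eta_intCast 1

lemma eta_one_sub (x : ℝ) : eta (1 - x) = -eta x := by
  by_cases hx : ∃ n : ℤ, x = n
  · obtain ⟨n, rfl⟩ := hx
    rw [show (1 : ℝ) - n = ((1 - n : ℤ) : ℝ) by push_cast; ring, eta_intCast, eta_intCast]
    split_ifs <;> omega
  · have h : ¬∃ n : ℤ, 1 - x = n := fun ⟨n, hn⟩ => hx ⟨1 - n, by push_cast; linarith⟩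
    rw [eta_of_forall_ne_intCast hx, eta_of_forall_ne_intCast h, neg_zero]

lemma eta_add_one {x : ℝ} (hx : x ≠ 0) : eta (x + 1) = eta x := by
  by_cases hx' : ∃ n : ℤ, x = n
  · obtain ⟨n, rfl⟩ := hx'
    have hn : n ≠ 0 := by exact_mod_cast hx
    rw [show (n : ℝ) + 1 = ((n + 1 : ℤ) : ℝ) by push_cast; ring, eta_intCast, eta_intCast]
    split_ifs <;> omega
  · have h : ¬∃ n : ℤ, x + 1 = n := fun ⟨n, hn⟩ => hx' ⟨n - 1, by push_cast; linarith⟩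
    rw [eta_of_forall_ne_intCast hx', eta_of_forall_ne_intCast h]

lemma eta_neg {x : ℝ} (hx : x ≠ 0) : eta (-x) = -eta x := by
  rw [← eta_add_one hx, ← eta_one_sub]
  ring_nf

lemma floor_intCast_mul {x : ℝ} {n : ℤ} (hx : x = n) (c : ℤ) : ⌊(c : ℝ) * x⌋ = c * ⌊x⌋ := by
  rw [hx, ← Int.cast_mul, Int.floor_intCast, Int.floor_intCast]

variable {E : Type*} [NormedAddCommGroup E] [InnerProductSpace ℝ E]

lemma inner_cv_left (α y : E) : ⟪cv α, y⟫_ℝ = 2 / ⟪α, α⟫_ℝ * ⟪α, y⟫_ℝ := by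
  rw [cv, real_inner_smul_left]

lemma inner_cv_self {α : E} (hα : α ≠ 0) : ⟪cv α, α⟫_ℝ = 2 := by
  rw [inner_cv_left]
  field_simp [inner_self_ne_zero.2 hα]

lemma cv_neg (α : E) : cv (-α) = -cv α := by
  simp [cv]

lemma aRefl_zero_apply_eq_lrefl (α y : E) : aRefl α 0 y = lrefl α y := by
  simp [aRefl]

lemma lrefl_apply {α : E} (hα : α ≠ 0) (y : E) : lrefl α y = y - ⟪cv α, y⟫_ℝ • α := by
  rw [lrefl, dif_neg (inner_self_ne_zero.2 hα), Module.reflection_apply, inner_cv_left]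
  rfl

lemma aRefl_apply {α : E} (hα : α ≠ 0) (c : ℝ) (y : E) :
    aRefl α c y = y - (⟪α, y⟫_ℝ + c) • cv α := by
  have : aRefl α c y = -(c • cv α) +ᵥ lrefl α y := rfl
  rw [this, lrefl_apply hα, inner_cv_left, cv, vadd_eq_add]
  module

lemma aRefl_zero_apply {α : E} (hα : α ≠ 0) (y : E) :
    aRefl α 0 y = y - ⟪cv α, y⟫_ℝ • α := by
  rw [aRefl_zero_apply_eq_lrefl, lrefl_apply hα]

lemma aRefl_zero_smul (α : E) (c : ℝ) (y : E) : aRefl α 0 (c • y) = c • aRefl α 0 y := by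
  simp only [aRefl_zero_apply_eq_lrefl, map_smul]

lemma aRefl_zero_neg (α y : E) : aRefl α 0 (-y) = -aRefl α 0 y := by
  simp only [aRefl_zero_apply_eq_lrefl, map_neg]

lemma aRefl_aRefl {α : E} (hα : α ≠ 0) (y : E) : aRefl α 0 (aRefl α 0 y) = y := by
  rw [aRefl_zero_apply_eq_lrefl, aRefl_zero_apply_eq_lrefl, lrefl,
    dif_neg (inner_self_ne_zero.2 hα)]
  exact Module.involutive_reflection _ y

lemma aRefl_self {α : E} (hα : α ≠ 0) : aRefl α 0 α = -α := by
  rw [aRefl_zero_apply hα, inner_cv_self hα]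
  module

lemma aRefl_cv {α : E} (hα : α ≠ 0) : aRefl α 0 (cv α) = -cv α := by
  rw [cv, aRefl_zero_smul, aRefl_self hα, smul_neg]

lemma aRefl_neg (α y : E) : aRefl (-α) 0 y = aRefl α 0 y := by
  rcases eq_or_ne α 0 with rfl | hα
  · simp
  rw [aRefl_zero_apply hα, aRefl_zero_apply (neg_ne_zero.2 hα), cv_neg, inner_neg_left]
  module

lemma inner_aRefl_right {β : E} (hβ : β ≠ 0) (c : ℝ) (α z : E) :
    ⟪α, aRefl β c z⟫_ℝ = ⟪α, z⟫_ℝ - ⟪cv β, α⟫_ℝ * (⟪β, z⟫_ℝ + c) := by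
  rw [aRefl_apply hβ, inner_sub_right, real_inner_smul_right, real_inner_comm (cv β) α]
  ring

lemma inner_aRefl_comm {β : E} (hβ : β ≠ 0) (α z : E) :
    ⟪aRefl β 0 α, z⟫_ℝ = ⟪α, aRefl β 0 z⟫_ℝ := by
  rw [real_inner_comm, inner_aRefl_right hβ, inner_aRefl_right hβ, inner_cv_left β z,
    inner_cv_left β α, real_inner_comm α z]
  ring

lemma aRefl_eq_self_iff {β : E} (hβ : β ≠ 0) (c : ℝ) (y : E) :
    aRefl β c y = y ↔ ⟪β, y⟫_ℝ + c = 0 := by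
  rw [aRefl_apply hβ, sub_eq_self, smul_eq_zero, cv, smul_eq_zero]
  simp [hβ]

lemma aRefl_linear_apply (α : E) (c : ℝ) (v : E) : (aRefl α c).linear v = aRefl α 0 v := by
  rw [aRefl_zero_apply_eq_lrefl]
  rfl

namespace Data

variable (D : Data E)

lemma ne_zero_of_mem_pos {α : E} (hα : α ∈ D.pos) : α ≠ 0 :=
  D.root_ne_zero α (D.pos_subset hα)

lemma neg_notMem_pos {α : E} (hα : α ∈ D.pos) : -α ∉ D.pos := by
  rcases D.pos_dichotomy α (D.pos_subset hα) with h | h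
  · exact h.2
  · exact absurd hα h.1

lemma inner_cv_eq_intCast {α β : E} (hα : α ∈ D.Φ0) (hβ : β ∈ D.Φ0) :
    ∃ n : ℤ, ⟪α, cv β⟫_ℝ = n := by
  simpa only [real_inner_comm] using D.root_crystal α hα β hβ

variable {D} {F : Type*} [Field F] {k : E → Fˣ}

lemma k_aRefl (hk : ∀ α ∈ D.Φ0, ∀ w ∈ D.W0, k (w.linear α) = k α) {β γ : E}
    (hβ : β ∈ D.Φ0) (hγ : γ ∈ D.Φ0) : k (aRefl β 0 γ) = k γ := by
  simpa only [aRefl_linear_apply] using hk γ hγ _ (Subgroup.subset_closure ⟨β, hβ, rfl⟩)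

lemma k_neg (hk : ∀ α ∈ D.Φ0, ∀ w ∈ D.W0, k (w.linear α) = k α) {γ : E}
    (hγ : γ ∈ D.Φ0) : k (-γ) = k γ := by
  rw [← aRefl_self (D.root_ne_zero γ hγ), k_aRefl hk hγ hγ]

variable (D)

lemma chi_cases {α : E} (hα : α ∈ D.Φ0) :
    (α ∈ D.pos ∧ D.chi α = 1) ∨ (-α ∈ D.pos ∧ D.chi α = -1) := by
  rcases D.pos_dichotomy α hα with h | h
  · exact Or.inl ⟨h.1, if_pos h.1⟩
  · exact Or.inr ⟨h.2, if_neg h.1⟩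

lemma chi_of_mem_pos {α : E} (hα : α ∈ D.pos) : D.chi α = 1 := if_pos hα

lemma chi_neg_of_mem_pos {α : E} (hα : α ∈ D.pos) : D.chi (-α) = -1 :=
  if_neg (D.neg_notMem_pos hα)

/-- `σ_β α`, the positive one of the two roots `±s_β α`. -/
noncomputable def reflPos (β α : E) : E := (D.chi (aRefl β 0 α) : ℝ) • aRefl β 0 α

variable {D}

lemma reflPos_mem_pos {β α : E} (hβ : β ∈ D.Φ0) (hα : α ∈ D.Φ0) : D.reflPos β α ∈ D.pos := by
  rcases D.chi_cases (D.root_refl_mem β hβ α hα) with ⟨h, hc⟩ | ⟨h, hc⟩ <;>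
    simpa [reflPos, hc] using h

lemma reflPos_reflPos {β α : E} (hβ : β ∈ D.Φ0) (hα : α ∈ D.pos) :
    D.reflPos β (D.reflPos β α) = α := by
  have hβ0 := D.root_ne_zero β hβ
  rcases D.chi_cases (D.root_refl_mem β hβ α (D.pos_subset hα)) with ⟨-, hc⟩ | ⟨-, hc⟩
  · simp [reflPos, hc, aRefl_aRefl hβ0, D.chi_of_mem_pos hα]
  · simp [reflPos, hc, aRefl_zero_neg, aRefl_aRefl hβ0, D.chi_neg_of_mem_pos hα]

lemma reflPos_self {β : E} (hβ : β ∈ D.pos) : D.reflPos β β = β := by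
  simp [reflPos, aRefl_self (D.ne_zero_of_mem_pos hβ), D.chi_neg_of_mem_pos hβ]

lemma inner_reflPos {β : E} (hβ : β ≠ 0) (α z : E) :
    ⟪D.reflPos β α, z⟫_ℝ = D.chi (aRefl β 0 α) * ⟪α, aRefl β 0 z⟫_ℝ := by
  rw [reflPos, real_inner_smul_left, inner_aRefl_comm hβ]

lemma k_reflPos (hk : ∀ α ∈ D.Φ0, ∀ w ∈ D.W0, k (w.linear α) = k α) {β α : E}
    (hβ : β ∈ D.Φ0) (hα : α ∈ D.Φ0) : k (D.reflPos β α) = k α := by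
  have hγ := D.root_refl_mem β hβ α hα
  rcases D.chi_cases hγ with ⟨-, hc⟩ | ⟨-, hc⟩
  · simp [reflPos, hc, k_aRefl hk hβ hα]
  · simp [reflPos, hc, k_neg hk hγ, k_aRefl hk hβ hα]

variable (D) in
/-- The exponent of `k α` in the character `s_β · 𝔰_y`. -/
noncomputable def reflEta (β y α : E) : ℤ := D.chi (aRefl β 0 α) * eta ⟪D.reflPos β α, y⟫_ℝ

lemma reflEta_self {β : E} (hβ : β ∈ D.pos) (y : E) : D.reflEta β y β = -eta ⟪β, y⟫_ℝ := by
  rw [reflEta, reflPos_self hβ, aRefl_self (D.ne_zero_of_mem_pos hβ), D.chi_neg_of_mem_pos hβ,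
    neg_one_mul]

variable (k) in
lemma sweight_aRefl (hk : ∀ α ∈ D.Φ0, ∀ w ∈ D.W0, k (w.linear α) = k α) {β : E}
    (hβ : β ∈ D.Φ0) (y : E) {lam : E} (hlam : ∀ α ∈ D.pos, ∃ n : ℤ, ⟪α, lam⟫_ℝ = n) :
    sweight D k y (aRefl β 0 lam) = ∏ α ∈ D.pos, k α ^ (D.reflEta β y α * ⌊⟪α, lam⟫_ℝ⌋) := by
  have hβ0 := D.root_ne_zero β hβ
  refine (Finset.prod_nbij' (D.reflPos β) (D.reflPos β)
    (fun α hα => reflPos_mem_pos hβ (D.pos_subset hα))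
    (fun α hα => reflPos_mem_pos hβ (D.pos_subset hα))
    (fun α hα => reflPos_reflPos hβ hα) (fun α hα => reflPos_reflPos hβ hα)
    fun α hα => ?_).symm
  obtain ⟨n, hn⟩ := hlam α hα
  rw [k_reflPos hk hβ (D.pos_subset hα), inner_reflPos hβ0 α (aRefl β 0 lam), aRefl_aRefl hβ0,
    floor_intCast_mul hn, reflEta]
  ring_nf

variable (k) in
lemma sweight_aRefl_of_balanced (hk : ∀ α ∈ D.Φ0, ∀ w ∈ D.W0, k (w.linear α) = k α)
    {β y : E} (hβ : β ∈ D.pos)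
    (hbal : ∀ α ∈ D.pos, α ≠ β → D.reflEta β y α = eta ⟪α, y⟫_ℝ)
    {lam : E} (hlam : ∀ α ∈ D.pos, ∃ n : ℤ, ⟪α, lam⟫_ℝ = n) :
    sweight D k y (aRefl β 0 lam) =
      k β ^ (-2 * eta ⟪β, y⟫_ℝ * ⌊⟪β, lam⟫_ℝ⌋) * sweight D k y lam := by
  rw [sweight_aRefl k hk (D.pos_subset hβ) y hlam, sweight, ← Finset.mul_prod_erase _ _ hβ,
    ← Finset.mul_prod_erase _ _ hβ, ← mul_assoc, ← zpow_add, reflEta_self hβ]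
  congr 1
  · ring_nf
  · refine Finset.prod_congr rfl fun α hα => ?_
    rw [hbal α (Finset.mem_of_mem_erase hα) (Finset.ne_of_mem_erase hα)]

lemma reflPos_ne {β α : E} (hβ : β ∈ D.pos) (hα : α ∈ D.pos) (hne : α ≠ β) :
    D.reflPos β α ≠ β := fun h => hne <| by
  rw [← reflPos_reflPos (D.pos_subset hβ) hα, h, reflPos_self hβ]

lemma inner_reflPos_cv {β : E} (hβ : β ≠ 0) (α : E) :
    ⟪D.reflPos β α, cv β⟫_ℝ = ((-D.chi (aRefl β 0 α) : ℤ) : ℝ) * ⟪α, cv β⟫_ℝ := by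
  rw [inner_reflPos hβ, aRefl_cv hβ, inner_neg_right]
  push_cast
  ring

variable (k) in
lemma prod_erase_cv_of_balanced (hk : ∀ α ∈ D.Φ0, ∀ w ∈ D.W0, k (w.linear α) = k α)
    {β y : E} (hβ : β ∈ D.pos)
    (hbal : ∀ α ∈ D.pos, α ≠ β → D.reflEta β y α = eta ⟪α, y⟫_ℝ) :
    ∏ α ∈ D.pos.erase β, k α ^ (eta ⟪α, y⟫_ℝ * ⌊⟪α, cv β⟫_ℝ⌋) = 1 := by
  have hβΦ := D.pos_subset hβ
  have hβ0 := D.root_ne_zero β hβΦ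
  refine Finset.prod_involution (fun α _ => D.reflPos β α) (fun α hα => ?_) (fun α hα hf hfix => ?_)
    (fun α hα => Finset.mem_erase.2 ⟨reflPos_ne hβ (Finset.mem_of_mem_erase hα)
      (Finset.ne_of_mem_erase hα), reflPos_mem_pos hβΦ (D.pos_subset (Finset.mem_of_mem_erase hα))⟩)
    fun α hα => reflPos_reflPos hβΦ (Finset.mem_of_mem_erase hα)
  all_goals
    have hαpos := Finset.mem_of_mem_erase hα
    have hexp := hbal α hαpos (Finset.ne_of_mem_erase hα)
    rw [reflEta] at hexp
  · obtain ⟨n, hn⟩ := D.inner_cv_eq_intCast (D.pos_subset hαpos) hβΦ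
    rw [k_reflPos hk hβΦ (D.pos_subset hαpos), inner_reflPos_cv hβ0, floor_intCast_mul hn,
      ← zpow_add, ← hexp]
    convert zpow_zero (k α) using 2
    ring
  · -- a root fixed by `σ_β` is orthogonal to `β`, or has `η(α(y)) = 0` by `hbal`
    refine hf ?_
    rcases D.chi_cases (D.root_refl_mem β hβΦ α (D.pos_subset hαpos)) with ⟨-, hc⟩ | ⟨-, hc⟩
    · have hperp : ⟪α, cv β⟫_ℝ = 0 := by
        have hsα : aRefl β 0 α = α := by simpa [reflPos, hc] using hfix
        rw [aRefl_eq_self_iff hβ0, add_zero] at hsα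
        rw [real_inner_comm, inner_cv_left, hsα, mul_zero]
      simp [hperp]
    · rw [hc, hfix] at hexp
      simp [show eta ⟪α, y⟫_ℝ = 0 by omega]

variable (k) in
lemma sweight_cv_of_balanced (hk : ∀ α ∈ D.Φ0, ∀ w ∈ D.W0, k (w.linear α) = k α)
    {β y : E} (hβ : β ∈ D.pos)
    (hbal : ∀ α ∈ D.pos, α ≠ β → D.reflEta β y α = eta ⟪α, y⟫_ℝ) :
    sweight D k y (cv β) = k β ^ (2 * eta ⟪β, y⟫_ℝ) := by
  rw [sweight, ← Finset.mul_prod_erase _ _ hβ, prod_erase_cv_of_balanced k hk hβ hbal, mul_one,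
    real_inner_comm (cv β) β, inner_cv_self (D.ne_zero_of_mem_pos hβ), mul_comm (eta _)]
  norm_num

variable (D k) in
lemma sweight_neg (y : E) {lam : E} (hlam : ∀ α ∈ D.pos, ∃ n : ℤ, ⟪α, lam⟫_ℝ = n) :
    sweight D k y (-lam) = (sweight D k y lam)⁻¹ := by
  rw [sweight, sweight, ← Finset.prod_inv_distrib]
  refine Finset.prod_congr rfl fun α hα => ?_
  obtain ⟨n, hn⟩ := hlam α hα
  rw [inner_neg_right, hn, ← Int.cast_neg, Int.floor_intCast, Int.floor_intCast, ← zpow_neg,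
    mul_neg]

lemma aRefl_simple_mem_pos (i : Fin D.r) {α : E} (hα : α ∈ D.pos) (hne : α ≠ D.simple i) :
    aRefl (D.simple i) 0 α ∈ D.pos := by
  have hi := D.pos_subset (D.simple_mem_pos i)
  refine ((D.pos_dichotomy _ (D.root_refl_mem _ hi α (D.pos_subset hα))).resolve_right
    fun ⟨_, hneg⟩ => hne ?_).1
  obtain ⟨a, ha⟩ := D.pos_nat_comb α hα
  obtain ⟨b, hb⟩ := D.pos_nat_comb _ hneg
  have hsum : ∑ j, ((a j + b j : ℕ) : ℝ) • D.simple j =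
      ∑ j, (if j = i then ⟪cv (D.simple i), α⟫_ℝ else 0) • D.simple j := by
    simp only [Nat.cast_add, add_smul, Finset.sum_add_distrib, ← ha, ← hb, ite_smul, zero_smul,
      Finset.sum_ite_eq', Finset.mem_univ, if_true, aRefl_zero_apply (D.ne_zero_of_mem_pos
        (D.simple_mem_pos i))]
    abel
  have hcoef := Fintype.linearIndependent_iffₛ.1 D.simple_indep _ _ hsum
  have hαi : α = (a i : ℝ) • D.simple i := by
    rw [ha, Finset.sum_eq_single i (fun j _ hj => ?_) (by simp)]
    have := hcoef j
    simp only [if_neg hj, Nat.cast_eq_zero, Nat.add_eq_zero_iff] at this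
    simp [this.1]
  rcases D.root_reduced _ hi _ (hαi ▸ D.pos_subset hα) with h | h
  · rw [hαi, h, one_smul]
  · exact absurd h (by have := (a i).cast_nonneg (α := ℝ); linarith)

variable (D) in
def cone : AddSubmonoid E := AddSubmonoid.closure (Set.range D.simple)

lemma mem_cone_iff {v : E} : v ∈ D.cone ↔ ∃ n : Fin D.r → ℕ, v = ∑ i, (n i : ℝ) • D.simple i := by
  simp [cone, AddSubmonoid.mem_closure_range_iff_of_fintype, Nat.cast_smul_eq_nsmul]

lemma mem_cone_of_mem_pos {α : E} (hα : α ∈ D.pos) : α ∈ D.cone :=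
  mem_cone_iff.2 (D.pos_nat_comb α hα)

lemma hroot_sub_mem_cone {α : E} (hα : α ∈ D.Φ0) : D.hroot - α ∈ D.cone :=
  mem_cone_iff.2 (D.hroot_highest α hα)

lemma eq_zero_of_mem_cone_of_neg_mem_cone {v : E} (hv : v ∈ D.cone) (hv' : -v ∈ D.cone) :
    v = 0 := by
  obtain ⟨a, ha⟩ := mem_cone_iff.1 hv
  obtain ⟨b, hb⟩ := mem_cone_iff.1 hv'
  have hcoef := Fintype.linearIndependent_iffₛ.1 D.simple_indep
    (fun i => ((a i + b i : ℕ) : ℝ)) 0 (by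
      simp only [Nat.cast_add, add_smul, Finset.sum_add_distrib, ← ha, ← hb, Pi.zero_apply,
        zero_smul, Finset.sum_const_zero, add_neg_cancel])
  rw [ha]
  refine Finset.sum_eq_zero fun i _ => ?_
  have := hcoef i
  simp only [Pi.zero_apply, Nat.cast_eq_zero, Nat.add_eq_zero_iff] at this
  simp [this.1]

lemma inner_cv_hroot_nonneg {α : E} (hα : α ∈ D.pos) : 0 ≤ ⟪cv D.hroot, α⟫_ℝ := by
  have hφ := D.hroot_mem_pos
  have hφ0 := D.ne_zero_of_mem_pos hφ
  obtain ⟨n, hn⟩ := D.root_crystal α (D.pos_subset hα) _ (D.pos_subset hφ)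
  rw [hn]
  suffices 0 ≤ n by exact_mod_cast this
  by_contra! hneg
  obtain ⟨m, hm⟩ := Int.eq_ofNat_of_zero_le (by omega : 0 ≤ -1 - n)
  -- otherwise `s_φ α` would lie above `φ`
  have hmem : aRefl D.hroot 0 α - D.hroot ∈ D.cone := by
    convert add_mem (mem_cone_of_mem_pos hα) (nsmul_mem (mem_cone_of_mem_pos hφ) m) using 1
    rw [aRefl_zero_apply hφ0, hn, ← Nat.cast_smul_eq_nsmul ℝ,
      show (m : ℝ) = -1 - n by exact_mod_cast hm.symm]
    module
  have htop : aRefl D.hroot 0 α = D.hroot := sub_eq_zero.1 <|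
    D.eq_zero_of_mem_cone_of_neg_mem_cone hmem <| by
      rw [neg_sub]
      exact hroot_sub_mem_cone (D.root_refl_mem _ (D.pos_subset hφ) α (D.pos_subset hα))
  have hα' := congrArg (aRefl D.hroot 0) htop
  rw [aRefl_aRefl hφ0, aRefl_self hφ0] at hα'
  exact D.neg_notMem_pos hφ (hα' ▸ hα)

lemma inner_cv_hroot_lt_two {α : E} (hα : α ∈ D.Φ0) (hne : α ≠ D.hroot) :
    ⟪cv D.hroot, α⟫_ℝ < 2 := by
  have hφ := D.pos_subset D.hroot_mem_pos
  have hnorm : ⟪α, α⟫_ℝ ≤ ⟪D.hroot, D.hroot⟫_ℝ := D.hroot_long ▸ D.root_norm_le α hα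
  have hdist : 0 < ⟪α - D.hroot, α - D.hroot⟫_ℝ := real_inner_self_pos.2 (sub_ne_zero.2 hne)
  have hφφ : 0 < ⟪D.hroot, D.hroot⟫_ℝ := real_inner_self_pos.2 (D.root_ne_zero _ hφ)
  rw [real_inner_sub_sub_self, real_inner_comm D.hroot α] at hdist
  rw [inner_cv_left, div_mul_eq_mul_div, div_lt_iff₀ hφφ]
  linarith

lemma hroot_cases {α : E} (hα : α ∈ D.pos) (hne : α ≠ D.hroot) :
    (⟪cv D.hroot, α⟫_ℝ = 0 ∧ D.chi (aRefl D.hroot 0 α) = 1) ∨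
      (⟪cv D.hroot, α⟫_ℝ = 1 ∧ D.chi (aRefl D.hroot 0 α) = -1) := by
  have hφ0 := D.ne_zero_of_mem_pos D.hroot_mem_pos
  obtain ⟨n, hn⟩ := D.root_crystal α (D.pos_subset hα) _ (D.pos_subset D.hroot_mem_pos)
  have h0 := D.inner_cv_hroot_nonneg hα
  have h2 := D.inner_cv_hroot_lt_two (D.pos_subset hα) hne
  rw [hn] at h0 h2 ⊢
  obtain rfl | rfl : n = 0 ∨ n = 1 := by
    have : 0 ≤ n := by exact_mod_cast h0
    have : n < 2 := by exact_mod_cast h2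
    omega
  · left
    simp [aRefl_zero_apply hφ0, hn, D.chi_of_mem_pos hα]
  · right
    refine ⟨by simp, if_neg fun hpos => hne ?_⟩
    rw [aRefl_zero_apply hφ0, hn, Int.cast_one, one_smul] at hpos
    refine sub_eq_zero.1 (D.eq_zero_of_mem_cone_of_neg_mem_cone (mem_cone_of_mem_pos hpos) ?_)
    rw [neg_sub]
    exact hroot_sub_mem_cone (D.pos_subset hα)

lemma reflEta_simple (i : Fin D.r) {α : E} (hα : α ∈ D.pos) (hne : α ≠ D.simple i) (y : E) :
    D.reflEta (D.simple i) y α = eta ⟪α, aRefl (D.simple i) 0 y⟫_ℝ := by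
  rw [reflEta, inner_reflPos (D.ne_zero_of_mem_pos (D.simple_mem_pos i)),
    D.chi_of_mem_pos (D.aRefl_simple_mem_pos i hα hne)]
  simp

lemma reflEta_hroot {α : E} (hα : α ∈ D.pos) (hne : α ≠ D.hroot) (y : E) :
    D.reflEta D.hroot y α = eta ⟪α, aRefl (-D.hroot) 1 y⟫_ℝ := by
  have hφ0 := D.ne_zero_of_mem_pos D.hroot_mem_pos
  rw [reflEta, inner_reflPos hφ0, inner_aRefl_right hφ0, inner_aRefl_right (neg_ne_zero.2 hφ0),
    cv_neg, inner_neg_left, inner_neg_left]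
  rcases D.hroot_cases hα hne with ⟨hm, hc⟩ | ⟨hm, hc⟩ <;> rw [hm, hc]
  · simp
  · rw [show ⟪α, y⟫_ℝ - -1 * (-⟪D.hroot, y⟫_ℝ + 1) = 1 - (⟪D.hroot, y⟫_ℝ - ⟪α, y⟫_ℝ) by ring,
      eta_one_sub]
    push_cast
    ring_nf

lemma aRefl_simple_eq_self_iff (i : Fin D.r) (y : E) :
    aRefl (D.simple i) 0 y = y ↔ ⟪D.simple i, y⟫_ℝ = 0 := by
  simpa using aRefl_eq_self_iff (D.ne_zero_of_mem_pos (D.simple_mem_pos i)) 0 y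

lemma aRefl_neg_hroot_eq_self_iff (y : E) :
    aRefl (-D.hroot) 1 y = y ↔ ⟪D.hroot, y⟫_ℝ = 1 := by
  rw [aRefl_eq_self_iff (neg_ne_zero.2 (D.ne_zero_of_mem_pos D.hroot_mem_pos)), inner_neg_left,
    neg_add_eq_zero, eq_comm]

variable (k)

lemma sweight_cv_simple (hk : ∀ α ∈ D.Φ0, ∀ w ∈ D.W0, k (w.linear α) = k α) (i : Fin D.r)
    {y : E} (hy : aRefl (D.simple i) 0 y = y) :
    sweight D k y (cv (D.simple i)) = k (D.simple i) ^ (-2 : ℤ) := by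
  rw [sweight_cv_of_balanced k hk (D.simple_mem_pos i) fun α hα hne => by
    rw [reflEta_simple i hα hne, hy], (D.aRefl_simple_eq_self_iff i y).1 hy, eta_zero]
  norm_num

lemma sweight_aRefl_simple_of_fixed (hk : ∀ α ∈ D.Φ0, ∀ w ∈ D.W0, k (w.linear α) = k α)
    (i : Fin D.r) {y lam : E} (hy : aRefl (D.simple i) 0 y = y)
    (hlam : ∀ α ∈ D.pos, ∃ n : ℤ, ⟪α, lam⟫_ℝ = n) :
    sweight D k y (aRefl (D.simple i) 0 lam) =
      k (D.simple i) ^ (2 * ⌊⟪D.simple i, lam⟫_ℝ⌋) * sweight D k y lam := by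
  rw [sweight_aRefl_of_balanced k hk (D.simple_mem_pos i) (fun α hα hne => by
    rw [reflEta_simple i hα hne, hy]) hlam, (D.aRefl_simple_eq_self_iff i y).1 hy, eta_zero]
  norm_num

lemma sweight_aRefl_simple (hk : ∀ α ∈ D.Φ0, ∀ w ∈ D.W0, k (w.linear α) = k α)
    (i : Fin D.r) {y lam : E} (hy : aRefl (D.simple i) 0 y ≠ y)
    (hlam : ∀ α ∈ D.pos, ∃ n : ℤ, ⟪α, lam⟫_ℝ = n) :
    sweight D k y (aRefl (D.simple i) 0 lam) = sweight D k (aRefl (D.simple i) 0 y) lam := by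
  have hi := D.simple_mem_pos i
  have hi0 := D.ne_zero_of_mem_pos hi
  rw [sweight_aRefl k hk (D.pos_subset hi) y hlam, sweight]
  refine Finset.prod_congr rfl fun α hα => ?_
  obtain rfl | hne := eq_or_ne α (D.simple i)
  · rw [reflEta_self hi, ← inner_aRefl_comm hi0, aRefl_self hi0, inner_neg_left,
      eta_neg (mt (D.aRefl_simple_eq_self_iff i y).2 hy)]
  · rw [reflEta_simple i hα hne]

lemma sweight_cv_neg_hroot (hk : ∀ α ∈ D.Φ0, ∀ w ∈ D.W0, k (w.linear α) = k α) {y : E}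
    (hy : aRefl (-D.hroot) 1 y = y) :
    sweight D k y (cv (-D.hroot)) = k (-D.hroot) ^ (-2 : ℤ) := by
  have hφ := D.hroot_mem_pos
  rw [cv_neg,
    sweight_neg D k y fun α hα => D.inner_cv_eq_intCast (D.pos_subset hα) (D.pos_subset hφ),
    sweight_cv_of_balanced k hk hφ fun α hα hne => by rw [reflEta_hroot hα hne, hy],
    k_neg hk (D.pos_subset hφ), (D.aRefl_neg_hroot_eq_self_iff y).1 hy, eta_one, ← zpow_neg]
  norm_num

lemma sweight_aRefl_neg_hroot_of_fixed (hk : ∀ α ∈ D.Φ0, ∀ w ∈ D.W0, k (w.linear α) = k α)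
    {y lam : E} (hy : aRefl (-D.hroot) 1 y = y)
    (hlam : ∀ α ∈ D.pos, ∃ n : ℤ, ⟪α, lam⟫_ℝ = n) :
    sweight D k y (aRefl (-D.hroot) 0 lam) =
      k (-D.hroot) ^ (2 * ⌊⟪-D.hroot, lam⟫_ℝ⌋) * sweight D k y lam := by
  have hφ := D.hroot_mem_pos
  obtain ⟨n, hn⟩ := hlam _ hφ
  rw [aRefl_neg, sweight_aRefl_of_balanced k hk hφ (fun α hα hne => by
    rw [reflEta_hroot hα hne, hy]) hlam, k_neg hk (D.pos_subset hφ),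
    (D.aRefl_neg_hroot_eq_self_iff y).1 hy, eta_one, inner_neg_left, hn, ← Int.cast_neg,
    Int.floor_intCast, Int.floor_intCast]
  ring_nf

lemma sweight_aRefl_neg_hroot (hk : ∀ α ∈ D.Φ0, ∀ w ∈ D.W0, k (w.linear α) = k α)
    {y lam : E} (hy : aRefl (-D.hroot) 1 y ≠ y)
    (hlam : ∀ α ∈ D.pos, ∃ n : ℤ, ⟪α, lam⟫_ℝ = n) :
    sweight D k y (aRefl (-D.hroot) 0 lam) = sweight D k (aRefl (-D.hroot) 1 y) lam := by
  have hφ := D.hroot_mem_pos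
  have hφ0 := D.ne_zero_of_mem_pos hφ
  rw [aRefl_neg, sweight_aRefl k hk (D.pos_subset hφ) y hlam, sweight]
  refine Finset.prod_congr rfl fun α hα => ?_
  obtain rfl | hne := eq_or_ne α D.hroot
  · have hy1 : 1 - ⟪D.hroot, y⟫_ℝ ≠ 0 :=
      sub_ne_zero.2 (Ne.symm (mt (D.aRefl_neg_hroot_eq_self_iff y).2 hy))
    rw [reflEta_self hφ, inner_aRefl_right (neg_ne_zero.2 hφ0), cv_neg, inner_neg_left,
      inner_neg_left, inner_cv_self hφ0,
      show ⟪D.hroot, y⟫_ℝ - -2 * (-⟪D.hroot, y⟫_ℝ + 1) = 1 - ⟪D.hroot, y⟫_ℝ + 1 by ring,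
      eta_add_one hy1, eta_one_sub]
  · rw [reflEta_hroot hα hne]

end Data

end SSV

theorem statement17_general
    {E : Type*} [NormedAddCommGroup E] [InnerProductSpace ℝ E]
    (D : SSV.Data E) {F : Type*} [Field F] (k : E → Fˣ)
    (hk : ∀ α ∈ D.Φ0, ∀ w ∈ D.W0, k (w.linear α) = k α)
    (Λ : AddSubgroup E)
    (hint : ∀ α ∈ D.Φ0, ∀ lam ∈ Λ, ∃ n : ℤ, ⟪α, lam⟫_ℝ = (n : ℝ))
    (y : E) (j : Fin (D.r + 1)) :
    (D.sgen j y = y →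
      SSV.sweight D k y (SSV.cv (D.asimple j).1) = k ((D.asimple j).1) ^ (-2 : ℤ) ∧
      ∀ lam ∈ Λ, SSV.sweight D k y (SSV.aRefl (D.asimple j).1 0 lam) =
        k ((D.asimple j).1) ^ (2 * ⌊⟪(D.asimple j).1, lam⟫_ℝ⌋) * SSV.sweight D k y lam) ∧
    (D.sgen j y ≠ y → ∀ lam ∈ Λ,
      SSV.sweight D k y (SSV.aRefl (D.asimple j).1 0 lam) =
        SSV.sweight D k (D.sgen j y) lam) := by
  have hlam : ∀ lam ∈ Λ, ∀ α ∈ D.pos, ∃ n : ℤ, ⟪α, lam⟫_ℝ = n :=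
    fun lam hlam α hα => hint α (D.pos_subset hα) lam hlam
  induction j using Fin.cases with
  | zero =>
    simp only [SSV.Data.sgen, SSV.Data.asimple, Fin.cases_zero]
    exact ⟨fun hy => ⟨SSV.Data.sweight_cv_neg_hroot k hk hy,
        fun lam hl => SSV.Data.sweight_aRefl_neg_hroot_of_fixed k hk hy (hlam lam hl)⟩,
      fun hy lam hl => SSV.Data.sweight_aRefl_neg_hroot k hk hy (hlam lam hl)⟩
  | succ i =>
    simp only [SSV.Data.sgen, SSV.Data.asimple, Fin.cases_succ]
    exact ⟨fun hy => ⟨SSV.Data.sweight_cv_simple k hk i hy,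
        fun lam hl => SSV.Data.sweight_aRefl_simple_of_fixed k hk i hy (hlam lam hl)⟩,
      fun hy lam hl => SSV.Data.sweight_aRefl_simple k hk i hy (hlam lam hl)⟩

/-- for `y ∈ E` and `0 ≤ j ≤ r`, with `β_j = Dα_j`:
(1) if `s_j·y = y` then `𝔰_y^{β_j∨} = k_j^{−2}` and `s_{β_j}·𝔰_y = k_j^{2β_j}·𝔰_y` in
`T_Λ`; (2) if `s_j·y ≠ y` then `s_{β_j}·𝔰_y = 𝔰_{s_j·y}` in `T_Λ`. -/
theorem statement17
    {E : Type*} [NormedAddCommGroup E] [InnerProductSpace ℝ E] [FiniteDimensional ℝ E]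
    (D : SSV.Data E) {F : Type*} [Field F] (k : E → Fˣ)
    (hk : ∀ α ∈ D.Φ0, ∀ w ∈ D.W0, k (w.linear α) = k α)
    (Λ : AddSubgroup E) (hΛfg : Λ.FG) (hQΛ : D.Qv ≤ Λ)
    (hint : ∀ α ∈ D.Φ0, ∀ lam ∈ Λ, ∃ n : ℤ, ⟪α, lam⟫_ℝ = (n : ℝ))
    (y : E) (j : Fin (D.r + 1)) :
    (D.sgen j y = y →
      SSV.sweight D k y (SSV.cv (D.asimple j).1) = k ((D.asimple j).1) ^ (-2 : ℤ) ∧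
      ∀ lam ∈ Λ, SSV.sweight D k y (SSV.aRefl (D.asimple j).1 0 lam) =
        k ((D.asimple j).1) ^ (2 * ⌊⟪(D.asimple j).1, lam⟫_ℝ⌋) * SSV.sweight D k y lam) ∧
    (D.sgen j y ≠ y → ∀ lam ∈ Λ,
      SSV.sweight D k y (SSV.aRefl (D.asimple j).1 0 lam) =
        SSV.sweight D k (D.sgen j y) lam) :=
  statement17_general D k hk Λ hint y j
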